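/- Let X be a simplicial abelian group and m ≥ 0. The following are equivalent: (1) for every n > m, the Segal maps X_n → X_{Λ_0^n} and X_n → X_{Λ_n^n} into the 0-th and n-th horn groups are isomorphisms; (2) the normalized Moore complex of X is m-truncated, i.e. ⋂_{i=1}^n ker(d_i : X_n → X_{n-1}) = 0 for all n > m. -/

import Mathlib

/-!
The Segal maps always land in the horn groups, by the simplicial identities `dᵢdⱼ = dⱼ₋₁dᵢ`,
and every horn in a simplicial abelian group has a filler: fill the faces one at a time,
correcting by a degeneracy `sₖ c` of the error `c`, which the horn conditions make invisible to
the faces already matched. So both Segal maps are bijective onto the horns exactly when they are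
injective, i.e. when `⋂_{i ≥ 1} ker dᵢ` and `⋂_{i ≤ n} ker dᵢ` vanish. The first is the Moore
complex, and its vanishing forces the second to vanish: an element whose faces vanish except
possibly one is the degeneracy of that face, and this moves the exceptional face down to `d₀`.
-/

open CategoryTheory Simplicial Opposite

/-- The compatibility ("matching") conditions cutting out the `0`-th horn
`X_{Λ₀^{n+1}}` inside `(X_n)^{n+1}`: a tuple `(x_1, …, x_{n+1})` (indexed here by
`Fin (n+1)`) is a horn iff `d_i x_j = d_{j-1} x_i` for all `1 ≤ i < j ≤ n+1`.
(For `n = 0` there are no conditions.) -/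
def hornCond0 (X : SimplicialObject AddCommGrpCat) :
    (n : ℕ) → (Fin (n + 1) → X.obj (op ⦋n⦌)) → Prop := fun n x => match n, x with
  | 0, _ => True
  | k + 1, x => ∀ i j : Fin (k + 1), i ≤ j →
      X.δ i.succ (x j.succ) = X.δ j.succ (x i.castSucc)

/-- The `0`-th horn group `X_{Λ₀^{n+1}}` of a simplicial abelian group. -/
def hornGroup0 (X : SimplicialObject AddCommGrpCat) (n : ℕ) :
    AddSubgroup (Fin (n + 1) → X.obj (op ⦋n⦌)) where
  carrier := {x | hornCond0 X n x}
  zero_mem' := by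
    cases n with
    | zero => exact trivial
    | succ k =>
      simp only [Set.mem_setOf_eq, hornCond0]
      intro i j h
      simp
  add_mem' := by
    cases n with
    | zero => intros; exact trivial
    | succ k =>
      intro a b ha hb
      simp only [Set.mem_setOf_eq, hornCond0] at *
      intro i j h
      simp only [Pi.add_apply, map_add, ha i j h, hb i j h]
  neg_mem' := by
    cases n with
    | zero => intros; exact trivial
    | succ k =>
      intro a ha
      simp only [Set.mem_setOf_eq, hornCond0] at *
      intro i j h
      simp only [Pi.neg_apply, map_neg, ha i j h]

/-- The Segal map `X_{n+1} → (X_n)^{n+1}`, `x ↦ (d_1 x, …, d_{n+1} x)`. -/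
def segalMap0 (X : SimplicialObject AddCommGrpCat) (n : ℕ) :
    X.obj (op ⦋n + 1⦌) →+ (Fin (n + 1) → X.obj (op ⦋n⦌)) where
  toFun y := fun i => X.δ i.succ y
  map_zero' := by funext i; simp
  map_add' a b := by funext i; simp

/-- The `(n+1)`-st term `⋂_{i=1}^{n+1} ker dᵢ` of the normalized Moore complex. -/
def mooreGroup0 (X : SimplicialObject AddCommGrpCat) (n : ℕ) :
    AddSubgroup (X.obj (op ⦋n + 1⦌)) where
  carrier := {y | ∀ i : Fin (n + 1), X.δ i.succ y = 0}
  zero_mem' := by intro i; simp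
  add_mem' := by intro a b ha hb i; simp [ha i, hb i]
  neg_mem' := by intro a ha i; simp [ha i]

/-- The matching conditions for the `n`-th horn `X_{Λ_{n+1}^{n+1}}`: a tuple
`(x_0, …, x_n)` with `d_i x_j = d_{j-1} x_i` for all `0 ≤ i < j ≤ n`. -/
def hornCondN (X : SimplicialObject AddCommGrpCat) :
    (n : ℕ) → (Fin (n + 1) → X.obj (op ⦋n⦌)) → Prop := fun n x => match n, x with
  | 0, _ => True
  | k + 1, x => ∀ i j : Fin (k + 1), i ≤ j →
      X.δ i.castSucc (x j.succ) = X.δ j.castSucc (x i.castSucc)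

/-- The `n`-th horn group `X_{Λ_{n+1}^{n+1}}` of a simplicial abelian group. -/
def hornGroupN (X : SimplicialObject AddCommGrpCat) (n : ℕ) :
    AddSubgroup (Fin (n + 1) → X.obj (op ⦋n⦌)) where
  carrier := {x | hornCondN X n x}
  zero_mem' := by
    cases n with
    | zero => exact trivial
    | succ k =>
      simp only [Set.mem_setOf_eq, hornCondN]
      intro i j h
      simp
  add_mem' := by
    cases n with
    | zero => intros; exact trivial
    | succ k =>
      intro a b ha hb
      simp only [Set.mem_setOf_eq, hornCondN] at *
      intro i j h
      simp only [Pi.add_apply, map_add, ha i j h, hb i j h]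
  neg_mem' := by
    cases n with
    | zero => intros; exact trivial
    | succ k =>
      intro a ha
      simp only [Set.mem_setOf_eq, hornCondN] at *
      intro i j h
      simp only [Pi.neg_apply, map_neg, ha i j h]

/-- The Segal map `X_{n+1} → (X_n)^{n+1}`, `x ↦ (d_0 x, …, d_n x)`. -/
def segalMapN (X : SimplicialObject AddCommGrpCat) (n : ℕ) :
    X.obj (op ⦋n + 1⦌) →+ (Fin (n + 1) → X.obj (op ⦋n⦌)) where
  toFun y := fun i => X.δ i.castSucc y
  map_zero' := by funext i; simp
  map_add' a b := by funext i; simp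


namespace CategoryTheory.SimplicialObject

section Apply

variable {C : Type*} [Category C] {FC : C → C → Type*} {CC : C → Type*}
  [∀ X Y, FunLike (FC X Y) (CC X) (CC Y)] [ConcreteCategory C FC] (X : SimplicialObject C)

lemma δ_δ_apply {n : ℕ} {i j : Fin (n + 2)} (H : i ≤ j) (y : ToType (X.obj (op ⦋n + 2⦌))) :
    X.δ i (X.δ j.succ y) = X.δ j (X.δ i.castSucc y) := by
  simpa using ConcreteCategory.congr_hom (X.δ_comp_δ H) y

lemma δ_castSucc_σ_apply {n : ℕ} (i : Fin (n + 1)) (y : ToType (X.obj (op ⦋n⦌))) :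
    X.δ i.castSucc (X.σ i y) = y := by
  simpa using ConcreteCategory.congr_hom X.δ_comp_σ_self y

lemma δ_succ_σ_apply {n : ℕ} (i : Fin (n + 1)) (y : ToType (X.obj (op ⦋n⦌))) :
    X.δ i.succ (X.σ i y) = y := by
  simpa using ConcreteCategory.congr_hom X.δ_comp_σ_succ y

lemma δ_σ_apply_of_le {n : ℕ} {i : Fin (n + 2)} {j : Fin (n + 1)} (H : i ≤ j.castSucc)
    (y : ToType (X.obj (op ⦋n + 1⦌))) :
    X.δ i.castSucc (X.σ j.succ y) = X.σ j (X.δ i y) := by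
  simpa using ConcreteCategory.congr_hom (X.δ_comp_σ_of_le H) y

lemma δ_σ_apply_of_gt {n : ℕ} {i : Fin (n + 2)} {j : Fin (n + 1)} (H : j.castSucc < i)
    (y : ToType (X.obj (op ⦋n + 1⦌))) :
    X.δ i.succ (X.σ j.castSucc y) = X.σ j (X.δ i y) := by
  simpa using ConcreteCategory.congr_hom (X.δ_comp_σ_of_gt H) y

end Apply

end CategoryTheory.SimplicialObject

open SimplicialObject

section

variable (X : SimplicialObject AddCommGrpCat)

lemma segalMap0_mem (n : ℕ) (y : X.obj (op ⦋n + 1⦌)) : segalMap0 X n y ∈ hornGroup0 X n := by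
  cases n with
  | zero => trivial
  | succ k =>
    intro i j h
    simpa [segalMap0, ← Fin.succ_castSucc] using X.δ_δ_apply (Fin.succ_le_succ_iff.2 h) y

lemma segalMapN_mem (n : ℕ) (y : X.obj (op ⦋n + 1⦌)) : segalMapN X n y ∈ hornGroupN X n := by
  cases n with
  | zero => trivial
  | succ k =>
    intro i j h
    simpa [segalMapN, ← Fin.succ_castSucc] using X.δ_δ_apply (Fin.castSucc_le_castSucc_iff.2 h) y

lemma exists_segalMap0_eq {n : ℕ} {x : Fin (n + 1) → X.obj (op ⦋n⦌)} (hx : x ∈ hornGroup0 X n) :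
    ∃ y, segalMap0 X n y = x := by
  suffices ∀ Q : Fin (n + 1), ∃ y : X.obj (op ⦋n + 1⦌), ∀ i, Q ≤ i → X.δ i.succ y = x i by
    obtain ⟨y, hy⟩ := this 0
    exact ⟨y, funext fun i => hy i (Fin.zero_le i)⟩
  intro Q
  induction Q using Fin.reverseInduction with
  | last =>
    refine ⟨X.σ (Fin.last n) (x (Fin.last n)), fun i hi => ?_⟩
    rw [Fin.last_le_iff.1 hi, δ_succ_σ_apply]
  | cast Q ih =>
    obtain ⟨k, rfl⟩ : ∃ k, n = k + 1 := Nat.exists_eq_add_one.2 (Nat.zero_lt_of_lt Q.isLt)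
    obtain ⟨w, hw⟩ := ih
    set c := x Q.castSucc - X.δ Q.castSucc.succ w
    have hc : ∀ q, Q ≤ q → X.δ q.succ c = 0 := fun q hq => by
      rw [map_sub, ← hx Q q hq, Fin.succ_castSucc, ← X.δ_δ_apply (Fin.succ_le_succ_iff.2 hq),
        hw q.succ (Fin.succ_le_succ_iff.2 hq), sub_self]
    refine ⟨w + X.σ Q.castSucc c, fun i hi => ?_⟩
    rcases hi.eq_or_lt with rfl | hlt
    · rw [map_add, δ_succ_σ_apply, add_sub_cancel]
    · obtain ⟨q, rfl⟩ := Fin.exists_succ_eq.2 (Fin.ne_zero_of_lt hlt)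
      have hq : Q ≤ q := Fin.castSucc_lt_succ_iff.1 hlt
      rw [map_add, hw _ (Fin.succ_le_succ_iff.2 hq), X.δ_σ_apply_of_gt hlt, hc q hq, map_zero,
        add_zero]

lemma exists_segalMapN_eq {n : ℕ} {x : Fin (n + 1) → X.obj (op ⦋n⦌)} (hx : x ∈ hornGroupN X n) :
    ∃ y, segalMapN X n y = x := by
  suffices ∀ Q : Fin (n + 1), ∃ y : X.obj (op ⦋n + 1⦌), ∀ i, i ≤ Q → X.δ i.castSucc y = x i by
    obtain ⟨y, hy⟩ := this (Fin.last n)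
    exact ⟨y, funext fun i => hy i (Fin.le_last i)⟩
  intro Q
  induction Q using Fin.induction with
  | zero =>
    refine ⟨X.σ 0 (x 0), fun i hi => ?_⟩
    rw [nonpos_iff_eq_zero.1 hi, δ_castSucc_σ_apply]
  | succ Q ih =>
    obtain ⟨k, rfl⟩ : ∃ k, n = k + 1 := Nat.exists_eq_add_one.2 (Nat.zero_lt_of_lt Q.isLt)
    obtain ⟨w, hw⟩ := ih
    set c := x Q.succ - X.δ Q.succ.castSucc w
    have hc : ∀ q, q ≤ Q → X.δ q.castSucc c = 0 := fun q hq => by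
      rw [map_sub, hx q Q hq, ← Fin.succ_castSucc, X.δ_δ_apply (Fin.castSucc_le_castSucc_iff.2 hq),
        hw q.castSucc (Fin.castSucc_le_castSucc_iff.2 hq), sub_self]
    refine ⟨w + X.σ Q.succ c, fun i hi => ?_⟩
    rcases hi.eq_or_lt with rfl | hlt
    · rw [map_add, δ_castSucc_σ_apply, add_sub_cancel]
    · obtain ⟨q, rfl⟩ := Fin.exists_castSucc_eq.2 (Fin.ne_last_of_lt hlt)
      have hq : q ≤ Q := Fin.castSucc_lt_succ_iff.1 hlt
      rw [map_add, hw _ (Fin.castSucc_le_castSucc_iff.2 hq),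
        X.δ_σ_apply_of_le (Fin.castSucc_le_castSucc_iff.2 hq), hc q hq, map_zero, add_zero]

lemma ker_segalMap0 (n : ℕ) : (segalMap0 X n).ker = mooreGroup0 X n := by
  ext y
  simp [segalMap0, mooreGroup0, funext_iff]

lemma δ_δ_eq_zero_of_ne {n : ℕ} {j : Fin (n + 3)} {y : X.obj (op ⦋n + 2⦌)}
    (hy : ∀ i ≠ j, X.δ i y = 0) (q : Fin (n + 2)) : X.δ q (X.δ j y) = 0 := by
  rcases lt_or_ge q.castSucc j with hlt | hle
  · obtain ⟨j, rfl⟩ := Fin.exists_succ_eq.2 (Fin.ne_zero_of_lt hlt)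
    rw [X.δ_δ_apply (Fin.castSucc_lt_succ_iff.1 hlt), hy _ hlt.ne, map_zero]
  · have hlt : j < q.succ := hle.trans_lt q.castSucc_lt_succ
    obtain ⟨j, rfl⟩ := Fin.exists_castSucc_eq.2 (Fin.ne_last_of_lt hlt)
    rw [← X.δ_δ_apply (Fin.castSucc_le_castSucc_iff.1 hle), hy _ hlt.ne', map_zero]

lemma δ_σ_eq_zero {n : ℕ} {t : X.obj (op ⦋n + 1⦌)} (ht : ∀ q, X.δ q t = 0) {r : Fin (n + 2)}
    {i : Fin (n + 3)} (h₁ : i ≠ r.castSucc) (h₂ : i ≠ r.succ) : X.δ i (X.σ r t) = 0 := by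
  rcases lt_or_gt_of_ne h₁ with hlt | hgt
  · obtain ⟨a, rfl⟩ := Fin.exists_castSucc_eq.2 (Fin.ne_last_of_lt hlt)
    have hlt : a < r := Fin.castSucc_lt_castSucc_iff.1 hlt
    obtain ⟨p, rfl⟩ := Fin.exists_succ_eq.2 (Fin.ne_zero_of_lt hlt)
    rw [X.δ_σ_apply_of_le (Fin.le_castSucc_iff.2 hlt), ht, map_zero]
  · have hgt : r.succ < i := lt_of_le_of_ne (Fin.castSucc_lt_iff_succ_le.1 hgt) h₂.symm
    obtain ⟨a, rfl⟩ := Fin.exists_succ_eq.2 (Fin.ne_zero_of_lt hgt)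
    obtain ⟨p, rfl⟩ := Fin.exists_castSucc_eq.2 (Fin.ne_last_of_lt (Fin.succ_lt_succ_iff.1 hgt))
    rw [X.δ_σ_apply_of_gt (Fin.succ_lt_succ_iff.1 hgt), ht, map_zero]

lemma eq_zero_of_δ_eq_zero_of_ne {n : ℕ} (hN : mooreGroup0 X n = ⊥) (r : Fin (n + 2))
    {y : X.obj (op ⦋n + 1⦌)} (hy : ∀ i ≠ r, X.δ i y = 0) : y = 0 := by
  induction r using Fin.induction generalizing y with
  | zero => exact (AddSubgroup.eq_bot_iff_forall _).1 hN y fun i => hy _ i.succ_ne_zero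
  | succ r ih =>
    set t := X.δ r.succ y
    have hy_eq : y = X.σ r t := sub_eq_zero.1 <| ih fun i hi => by
      rw [map_sub]
      by_cases hir : i = r.succ
      · rw [hir, δ_succ_σ_apply, sub_self]
      obtain ⟨l, rfl⟩ : ∃ l, n = l + 1 := Nat.exists_eq_add_one.2 <| by
        have := Fin.val_ne_of_ne hi; have := Fin.val_ne_of_ne hir; simp only [ne_eq, Fin.val_castSucc, Fin.val_succ] at *; omega
      rw [hy i hir, δ_σ_eq_zero X (δ_δ_eq_zero_of_ne X hy) hi hir, sub_self]
    have ht : t = 0 := by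
      rw [← δ_castSucc_σ_apply X r t, ← hy_eq]
      exact hy _ (Fin.castSucc_lt_succ (i := r)).ne
    rw [hy_eq, ht, map_zero]

lemma segalMapN_injective {n : ℕ} (hN : mooreGroup0 X n = ⊥) :
    Function.Injective (segalMapN X n) :=
  (injective_iff_map_eq_zero _).2 fun y hy =>
    eq_zero_of_δ_eq_zero_of_ne X hN (Fin.last _) fun i hi => by
      obtain ⟨i, rfl⟩ := Fin.exists_castSucc_eq.2 hi
      exact congrFun hy i

end

/-- For a simplicial abelian group `X` and `m ≥ 0`, the following are equivalent:
(1) for every `n > m` the Segal maps `X_n → X_{Λ₀ⁿ}` and `X_n → X_{Λₙⁿ}` are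
isomorphisms onto the horn groups; (2) the normalized Moore complex of `X` is
`m`-truncated, i.e. `⋂_{i=1}^{n} ker dᵢ = 0` for all `n > m`. -/
theorem stmt_16 (X : SimplicialObject AddCommGrpCat) (m : ℕ) :
    (∀ n : ℕ, m ≤ n →
      (∀ y : X.obj (op ⦋n + 1⦌), segalMap0 X n y ∈ hornGroup0 X n) ∧
      (∀ z ∈ hornGroup0 X n, ∃! y : X.obj (op ⦋n + 1⦌), segalMap0 X n y = z) ∧
      (∀ y : X.obj (op ⦋n + 1⦌), segalMapN X n y ∈ hornGroupN X n) ∧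
      (∀ z ∈ hornGroupN X n, ∃! y : X.obj (op ⦋n + 1⦌), segalMapN X n y = z))
    ↔
    (∀ n : ℕ, m ≤ n → ∀ y : X.obj (op ⦋n + 1⦌),
      (∀ i : Fin (n + 1), X.δ i.succ y = 0) → y = 0) := by
  refine ⟨fun h n hn y hy => ?_, fun h n hn => ?_⟩
  · obtain ⟨-, hbij, -, -⟩ := h n hn
    exact (hbij 0 (zero_mem _)).unique (funext hy) (map_zero _)
  · have hN : mooreGroup0 X n = ⊥ := (AddSubgroup.eq_bot_iff_forall _).2 (h n hn)
    have inj₀ : Function.Injective (segalMap0 X n) :=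
      (AddMonoidHom.ker_eq_bot_iff _).1 ((ker_segalMap0 X n).trans hN)
    refine ⟨segalMap0_mem X n, fun z hz => ?_, segalMapN_mem X n, fun z hz => ?_⟩
    · obtain ⟨y, rfl⟩ := exists_segalMap0_eq X hz
      exact ⟨y, rfl, fun _ h => inj₀ h⟩
    · obtain ⟨y, rfl⟩ := exists_segalMapN_eq X hz
      exact ⟨y, rfl, fun _ h => segalMapN_injective X hN h⟩
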